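/- The map R satisfies the Yang–Baxter equation: (R⊗id)∘(id⊗R)∘(R⊗id) = (id⊗R)∘(R⊗id)∘(id⊗R) as k-linear endomorphisms of D*⊗D*⊗D*. -/

import Mathlib

/-- Basis labels for the differential graded algebra `D*` over `k`:
`one` is the constant function `1` (degree 0), `Y s` is the Heaviside function
with singular support `{s}` (degree 0), and `om s` is the Dirac function with
singular support `{s}` (degree 1). -/
inductive DB : Type
  | one : DB
  | Y : ℤ → DB
  | om : ℤ → DB
  deriving DecidableEq

/-- cohomological degree of a basis element -/
def DB.deg : DB → ℕ
  | .one => 0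
  | .Y _ => 0
  | .om _ => 1

/-- singular support of a basis element -/
def DB.supp : DB → Finset ℤ
  | .one => ∅
  | .Y s => {s}
  | .om s => {s}

variable (k : Type) [CommRing k]

/-- The `n`-fold tensor power `D*^{⊗n}` of the complex `D*` over `k`, modelled as the
free `k`-module on the basis of decomposable tensors `f₁ ⊗ ⋯ ⊗ f_n` of basis elements. -/
abbrev Tot (n : ℕ) : Type := (Fin n → DB) →₀ k

/-- total (cohomological) degree of a basis tensor -/
def degT {n : ℕ} (g : Fin n → DB) : ℕ := ∑ i, (g i).deg

/-- the homogeneous degree-`i` component of `D*^{⊗n}` -/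
def homog (n i : ℕ) : Submodule k (Tot k n) where
  carrier := {x | ∀ g, x g ≠ 0 → degT g = i}
  add_mem' := by
    intro x y hx hy g hg
    by_cases h : x g = 0
    · refine hy g ?_
      intro h'; apply hg; simp [Finsupp.add_apply, h, h']
    · exact hx g h
  zero_mem' := by intro g hg; simp at hg
  smul_mem' := by
    intro c x hx g hg
    refine hx g fun h => hg ?_
    simp [Finsupp.smul_apply, h]

lemma mem_homog {n i : ℕ} {x : Tot k n} :
    x ∈ homog k n i ↔ ∀ g, x g ≠ 0 → degT g = i := Iff.rfl

/-- `I` : the span of the basis tensors `f₀ ⊗ ⋯ ⊗ f_r` in which every factor is a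
Heaviside or a Dirac function (no factor equals `1`). -/
def noOne (n : ℕ) : Submodule k (Tot k n) where
  carrier := {x | ∀ g, x g ≠ 0 → ∀ i, g i ≠ DB.one}
  add_mem' := by
    intro x y hx hy g hg
    by_cases h : x g = 0
    · refine hy g ?_
      intro h'; apply hg; simp [Finsupp.add_apply, h, h']
    · exact hx g h
  zero_mem' := by intro g hg; simp at hg
  smul_mem' := by
    intro c x hx g hg
    refine hx g fun h => hg ?_
    simp [Finsupp.smul_apply, h]

lemma mem_noOne {n : ℕ} {x : Tot k n} :
    x ∈ noOne k n ↔ ∀ g, x g ≠ 0 → ∀ i, g i ≠ DB.one := Iff.rfl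

/-- The Koszul-sign differential on a basis tensor:
`d(f₁ ⊗ ⋯ ⊗ f_n) = Σ_i (-1)^{deg f₁ + ⋯ + deg f_{i-1}} f₁ ⊗ ⋯ ⊗ d f_i ⊗ ⋯ ⊗ f_n`,
where `d(Y s) = - ω_s`, `d 1 = 0`, `d (ω s) = 0`. -/
noncomputable def dB {n : ℕ} (g : Fin n → DB) : Tot k n :=
  ∑ i : Fin n,
    match g i with
    | DB.Y s =>
        Finsupp.single (Function.update g i (DB.om s))
          (-(-1 : k) ^ (∑ j ∈ Finset.univ.filter (fun j : Fin n => j < i), (g j).deg))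
    | _ => (0 : Tot k n)

/-- the total differential of the complex `D*^{⊗n}` (it raises degree by one) -/
noncomputable def dT (n : ℕ) : Tot k n →ₗ[k] Tot k n :=
  Finsupp.linearCombination k (dB k (n := n))


/-- the pair basis tensor `a ⊗ b` -/
def p2 (a b : DB) : Fin 2 → DB := ![a, b]

/-- The braiding `R` on basis tensors, determined by:
`R(f ⊗ g) = g ⊗ f` for `f, g` of degree 0; `R(ω ⊗ g) = T(g) ⊗ ω` for `ω` of degree 1 and
`g` of degree 0 (where `T` is the translation, `T Y_t = Y_{t-1}`);
`R(f ⊗ ω) = ω ⊗ f − ι(ω) ⊗ df` (where `ι ω_t = Y_t − Y_{t-1}` and `d Y_s = −ω_s`);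
and `R(ω ⊗ θ) = −T(θ) ⊗ ω` for `ω, θ` of degree 1. -/
noncomputable def Rb : DB → DB → Tot k 2
  | DB.one, DB.om t => Finsupp.single (p2 (DB.om t) DB.one) 1
  | DB.Y s, DB.om t =>
      Finsupp.single (p2 (DB.om t) (DB.Y s)) 1
        + Finsupp.single (p2 (DB.Y t) (DB.om s)) 1
        - Finsupp.single (p2 (DB.Y (t - 1)) (DB.om s)) 1
  | DB.om s, DB.one => Finsupp.single (p2 DB.one (DB.om s)) 1
  | DB.om s, DB.Y t => Finsupp.single (p2 (DB.Y (t - 1)) (DB.om s)) 1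
  | DB.om s, DB.om t => -Finsupp.single (p2 (DB.om (t - 1)) (DB.om s)) 1
  | a, b => Finsupp.single (p2 b a) 1

/-- the braiding `R : D* ⊗ D* → D* ⊗ D*` -/
noncomputable def RT : Tot k 2 →ₗ[k] Tot k 2 :=
  Finsupp.linearCombination k fun g => Rb k (g 0) (g 1)

/-- `y ↦ y ⊗ c`, gluing a third factor on the right -/
noncomputable def appendR (c : DB) : Tot k 2 →ₗ[k] Tot k 3 :=
  Finsupp.linearCombination k fun g => Finsupp.single ![g 0, g 1, c] 1

/-- `y ↦ c ⊗ y`, gluing a third factor on the left -/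
noncomputable def appendL (c : DB) : Tot k 2 →ₗ[k] Tot k 3 :=
  Finsupp.linearCombination k fun g => Finsupp.single ![c, g 0, g 1] 1

/-- `R ⊗ id : D*⊗D*⊗D* → D*⊗D*⊗D*` -/
noncomputable def R12 : Tot k 3 →ₗ[k] Tot k 3 :=
  Finsupp.linearCombination k fun g =>
    appendR k (g 2) (RT k (Finsupp.single ![g 0, g 1] 1))

/-- `id ⊗ R : D*⊗D*⊗D* → D*⊗D*⊗D*` -/
noncomputable def R23 : Tot k 3 →ₗ[k] Tot k 3 :=
  Finsupp.linearCombination k fun g =>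
    appendL k (g 0) (RT k (Finsupp.single ![g 1, g 2] 1))

/-! Both sides are `k`-linear, so it suffices to compare them on basis tensors `a ⊗ b ⊗ c`;
there `R` acts by the explicit formulas `Rb`, and each of the 27 cases (by the type `1`, `Y`, `ω`
of each factor) is an identity of finite formal sums of basis tensors. -/

section YangBaxter

variable {k : Type} [CommRing k]

lemma RT_single (a b : DB) (r : k) :
    RT k (Finsupp.single ![a, b] r) = r • Rb k a b := by
  rw [RT, Finsupp.linearCombination_single]
  rfl

lemma appendR_single (a b c : DB) (r : k) :
    appendR k c (Finsupp.single ![a, b] r) = Finsupp.single ![a, b, c] r := by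
  rw [appendR, Finsupp.linearCombination_single, Finsupp.smul_single_one]
  rfl

lemma appendL_single (a b c : DB) (r : k) :
    appendL k c (Finsupp.single ![a, b] r) = Finsupp.single ![c, a, b] r := by
  rw [appendL, Finsupp.linearCombination_single, Finsupp.smul_single_one]
  rfl

lemma R12_single (a b c : DB) (r : k) :
    R12 k (Finsupp.single ![a, b, c] r) = r • appendR k c (Rb k a b) := by
  rw [R12, Finsupp.linearCombination_single, RT_single, one_smul]
  rfl

lemma R23_single (a b c : DB) (r : k) :
    R23 k (Finsupp.single ![a, b, c] r) = r • appendL k a (Rb k b c) := by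
  rw [R23, Finsupp.linearCombination_single, RT_single, one_smul]
  rfl

theorem yangBaxter_single (a b c : DB) :
    R12 k (R23 k (R12 k (Finsupp.single ![a, b, c] 1))) =
      R23 k (R12 k (R23 k (Finsupp.single ![a, b, c] 1))) := by
  cases a <;> cases b <;> cases c <;>
    simp only [R12_single, R23_single, Rb, p2, appendR_single, appendL_single, map_add,
      map_sub, map_neg, smul_add, smul_sub, smul_neg, one_smul] <;>
    abel

end YangBaxter

theorem statement13 (k : Type) [CommRing k] :
    (R12 k).comp ((R23 k).comp (R12 k)) = (R23 k).comp ((R12 k).comp (R23 k)) := by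
  refine Finsupp.lhom_ext fun g r => ?_
  have hg : g = ![g 0, g 1, g 2] := by
    funext i
    fin_cases i <;> rfl
  rw [hg, ← Finsupp.smul_single_one]
  simp only [LinearMap.comp_apply, map_smul, yangBaxter_single]
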